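/- arXiv:1910.10348 — 6 statements merged into one kernel-verified Lean document; each statement's English description precedes it below -/
import Mathlib

section
/- Let c(P) be the minimum over all choices of possessions (R_j ∈ ℛ_j for each j ∈ J(P)) of the cardinality of the union of the sets R_j ∩ P. Then c satisfies the recursion: if J(P) = ∅ then c(P) = 0, and otherwise, for any fixed job j' ∈ J(P), c(P) = min over X ∈ ℛ_{j'} of (|X ∩ P| + c(P ∖ X)). -/
open Finset
open scoped Classical

/-- `J(P)`: the set of jobs every one of whose possessions meets `P`. -/
noncomputable def Jset {α ι : Type*} [DecidableEq α] [Fintype ι]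
    (ℛ : ι → Finset (Finset α)) (P : Finset α) : Finset ι :=
  Finset.univ.filter fun j => ∀ S ∈ ℛ j, (S ∩ P).Nonempty

/-- `c(P)`: minimum cardinality of `⋃_{j ∈ J(P)} (R_j ∩ P)` over choices `R_j ∈ ℛ j`. -/
noncomputable def cval {α ι : Type*} [DecidableEq α] [DecidableEq ι] [Fintype ι]
    (ℛ : ι → Finset (Finset α)) (P : Finset α) : ℕ :=
  sInf {n | ∃ f : ι → Finset α, (∀ j, f j ∈ ℛ j) ∧
    n = ((Jset ℛ P).biUnion fun j => f j ∩ P).card}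

/-!
A choice `f` for `P` costs `|⋃_{j ∈ J(P)} (f j ∩ P)|`. Given an optimal choice for `P` and
`X := f j'`, the part of the union outside `X` is a choice for `P \ X`, so
`|X ∩ P| + c(P \ X) ≤ c(P)`. Conversely, an optimal choice for `P \ X`, extended to the jobs
outside `J(P \ X)` by possessions missing `P \ X`, has cost at most `|X ∩ P| + c(P \ X)` for `P`.
-/

section Jset

variable {α ι : Type*} [DecidableEq α] [Fintype ι] (ℛ : ι → Finset (Finset α))

@[simp]
lemma mem_Jset {P : Finset α} {j : ι} : j ∈ Jset ℛ P ↔ ∀ S ∈ ℛ j, (S ∩ P).Nonempty := by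
  simp [Jset]

lemma Jset_mono {P Q : Finset α} (h : Q ⊆ P) : Jset ℛ Q ⊆ Jset ℛ P := fun _ hj =>
  (mem_Jset ℛ).2 fun S hS => ((mem_Jset ℛ).1 hj S hS).mono (inter_subset_inter_left h)

lemma exists_inter_eq_empty_of_notMem_Jset {P : Finset α} {j : ι} (hj : j ∉ Jset ℛ P) :
    ∃ S ∈ ℛ j, S ∩ P = ∅ := by
  simpa [not_nonempty_iff_eq_empty] using hj

end Jset

section cval

variable {α ι : Type*} [DecidableEq α] [DecidableEq ι] [Fintype ι] (ℛ : ι → Finset (Finset α))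

noncomputable def choiceCost (P : Finset α) (f : ι → Finset α) : ℕ :=
  ((Jset ℛ P).biUnion fun j => f j ∩ P).card

lemma cval_le_choiceCost (P : Finset α) {f : ι → Finset α} (hf : ∀ j, f j ∈ ℛ j) :
    cval ℛ P ≤ choiceCost ℛ P f :=
  Nat.sInf_le ⟨f, hf, rfl⟩

lemma exists_cval_eq_choiceCost (hR : ∀ j, (ℛ j).Nonempty) (P : Finset α) :
    ∃ f : ι → Finset α, (∀ j, f j ∈ ℛ j) ∧ cval ℛ P = choiceCost ℛ P f := by
  have hne : {n | ∃ f : ι → Finset α, (∀ j, f j ∈ ℛ j) ∧ n = choiceCost ℛ P f}.Nonempty :=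
    ⟨_, fun j => (hR j).choose, fun j => (hR j).choose_spec, rfl⟩
  exact Nat.sInf_mem hne

lemma cval_eq_zero_of_Jset_eq_empty {P : Finset α} (h : Jset ℛ P = ∅) : cval ℛ P = 0 := by
  rw [cval, Nat.sInf_eq_zero]
  refine (Set.eq_empty_or_nonempty _).symm.imp ?_ id
  rintro ⟨_, f, hf, -⟩
  exact ⟨f, hf, by simp [h]⟩

lemma card_inter_add_cval_sdiff_le_choiceCost {P : Finset α} {f : ι → Finset α}
    (hf : ∀ j, f j ∈ ℛ j) {j' : ι} (hj' : j' ∈ Jset ℛ P) :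
    (f j' ∩ P).card + cval ℛ (P \ f j') ≤ choiceCost ℛ P f := by
  set U := (Jset ℛ P).biUnion fun j => f j ∩ P
  have hXU : f j' ∩ P ⊆ U := subset_biUnion_of_mem (fun j => f j ∩ P) hj'
  have hrest : (Jset ℛ (P \ f j')).biUnion (fun j => f j ∩ (P \ f j')) ⊆ U \ (f j' ∩ P) := by
    intro a ha
    obtain ⟨j, hj, haj, haP, hax⟩ : ∃ j ∈ Jset ℛ (P \ f j'), a ∈ f j ∧ a ∈ P ∧ a ∉ f j' := by
      simpa using ha
    exact mem_sdiff.2 ⟨mem_biUnion.2 ⟨j, Jset_mono ℛ sdiff_subset hj, mem_inter.2 ⟨haj, haP⟩⟩,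
      fun h => hax (mem_inter.1 h).1⟩
  calc (f j' ∩ P).card + cval ℛ (P \ f j')
      ≤ (f j' ∩ P).card + (U \ (f j' ∩ P)).card := by
        gcongr
        exact (cval_le_choiceCost ℛ _ hf).trans (card_le_card hrest)
    _ = choiceCost ℛ P f := by rw [add_comm, card_sdiff_add_card_eq_card hXU]; rfl

lemma cval_le_card_inter_add_cval_sdiff (hR : ∀ j, (ℛ j).Nonempty) (P X : Finset α) :
    cval ℛ P ≤ (X ∩ P).card + cval ℛ (P \ X) := by
  obtain ⟨f, hf, hcf⟩ := exists_cval_eq_choiceCost ℛ hR (P \ X)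
  choose g hg hgP using fun j (hj : j ∉ Jset ℛ (P \ X)) =>
    exists_inter_eq_empty_of_notMem_Jset ℛ hj
  set F : ι → Finset α := fun j => if hj : j ∈ Jset ℛ (P \ X) then f j else g j hj
  have hF : ∀ j, F j ∈ ℛ j := fun j => by
    dsimp only [F]
    split_ifs with hj
    exacts [hf j, hg j hj]
  have hcover : (Jset ℛ P).biUnion (fun j => F j ∩ P) ⊆
      X ∩ P ∪ (Jset ℛ (P \ X)).biUnion (fun j => f j ∩ (P \ X)) := by
    intro a ha
    obtain ⟨j, -, haF, haP⟩ : ∃ j ∈ Jset ℛ P, a ∈ F j ∧ a ∈ P := by simpa using ha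
    by_cases hax : a ∈ X
    · exact mem_union_left _ (mem_inter.2 ⟨hax, haP⟩)
    by_cases hj : j ∈ Jset ℛ (P \ X)
    · simp only [F, hj, dite_true] at haF
      exact mem_union_right _ (mem_biUnion.2 ⟨j, hj, by simp [haF, haP, hax]⟩)
    · simp only [F, hj, dite_false] at haF
      have : a ∈ g j hj ∩ (P \ X) := by simp [haF, haP, hax]
      simp [hgP j hj] at this
  calc cval ℛ P ≤ choiceCost ℛ P F := cval_le_choiceCost ℛ P hF
    _ ≤ (X ∩ P).card + choiceCost ℛ (P \ X) f := (card_le_card hcover).trans (card_union_le _ _)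
    _ = (X ∩ P).card + cval ℛ (P \ X) := by rw [hcf]

end cval

/-- Lemma 2 (`lem:recurrence`): the recursion for the optimal value `c(P)`:
if `J(P) = ∅` then `c(P) = 0`, and otherwise, for any job `j' ∈ J(P)`,
`c(P) = min_{X ∈ ℛ j'} (|X ∩ P| + c(P \ X))`. -/
theorem recurrence {α ι : Type*} [DecidableEq α] [DecidableEq ι] [Fintype ι]
    (ℛ : ι → Finset (Finset α)) (hR : ∀ j, (ℛ j).Nonempty) (P : Finset α) :
    (Jset ℛ P = ∅ → cval ℛ P = 0) ∧
    (∀ j' ∈ Jset ℛ P,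
      cval ℛ P = sInf {n | ∃ X ∈ ℛ j', n = (X ∩ P).card + cval ℛ (P \ X)}) := by
  refine ⟨cval_eq_zero_of_Jset_eq_empty ℛ, fun j' hj' => le_antisymm ?_ ?_⟩
  · obtain ⟨X, hX⟩ := hR j'
    apply le_csInf
    · exact ⟨(X ∩ P).card + cval ℛ (P \ X), X, hX, rfl⟩
    rintro _ ⟨Y, -, rfl⟩
    exact cval_le_card_inter_add_cval_sdiff ℛ hR P Y
  · obtain ⟨f, hf, hcf⟩ := exists_cval_eq_choiceCost ℛ hR P
    calc _ ≤ (f j' ∩ P).card + cval ℛ (P \ f j') := Nat.sInf_le (by exact ⟨f j', hf j', rfl⟩)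
      _ ≤ choiceCost ℛ P f := card_inter_add_cval_sdiff_le_choiceCost ℛ hf hj'
      _ = cval ℛ P := hcf.symm
end

section
/- Consider the constraint matrix A with rows indexed by jobs j and columns by pairs (i,k) with 1 ≤ i ≤ k ≤ m, where a_{j,(i,k)} = 1 if |[i,k] ∩ [r'_j, d'_j]| ≥ p' and 0 otherwise, and assume all jobs have the same length p' and the jobs are ordered so that r'_1 < r'_2 < ⋯ < r'_n and d'_1 < d'_2 < ⋯ < d'_n. Then A is an interval matrix: in every column, the rows with entry 1 form a consecutive set of job indices. Concretely: if j_1 < j_2 < j_3 and a_{j_1,(i,k)} = a_{j_3,(i,k)} = 1, then a_{j_2,(i,k)} = 1. -/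
open Finset

theorem Finset.Icc_inter_Icc {α : Type*} [Lattice α] [LocallyFiniteOrder α] [DecidableEq α]
    {a₁ b₁ a₂ b₂ : α} :
    Icc a₁ b₁ ∩ Icc a₂ b₂ = Icc (a₁ ⊔ a₂) (b₁ ⊓ b₂) :=
  coe_injective <| by push_cast; exact Set.Icc_inter_Icc

/- If the window `[i, k]` ends by `d₂`, its overlap with `[r₃, d₃]` lies in `[r₂, d₂]`.
Otherwise, if it starts at or after `r₂`, its overlap with `[r₁, d₁]` lies in `[r₂, d₂]`;
if not, it contains all of `[r₂, d₂]`. -/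
theorem Finset.min_card_le_card_Icc_inter_Icc {α : Type*} [LinearOrder α] [LocallyFiniteOrder α]
    {i k r₁ d₁ r₂ d₂ r₃ d₃ : α} (hr : r₂ ≤ r₃) (hd : d₁ ≤ d₂) :
    min #(Icc i k ∩ Icc r₁ d₁) (min #(Icc i k ∩ Icc r₃ d₃) #(Icc r₂ d₂)) ≤
      #(Icc i k ∩ Icc r₂ d₂) := by
  simp only [Icc_inter_Icc]
  rcases le_total k d₂ with hk | hk
  · refine (min_le_right _ _).trans <| (min_le_left _ _).trans <| card_le_card <|
      Icc_subset_Icc (sup_le_sup_left hr i) ?_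
    rw [inf_eq_left.mpr hk]
    exact inf_le_left
  rcases le_total r₂ i with hi | hi
  · refine (min_le_left _ _).trans <| card_le_card <| Icc_subset_Icc ?_ (inf_le_inf_left k hd)
    rw [sup_eq_left.mpr hi]
    exact le_sup_left
  · rw [sup_eq_right.mpr hi, inf_eq_right.mpr hk]
    exact (min_le_right _ _).trans (min_le_right _ _)

/-- Lemma (`lem:unimodularity_of_SCM`, key step): with all jobs of the same length `p'`
and release/deadline indices strictly increasing, the constraint matrix
`a_{j,(i,k)} = 1 ⟺ |[i,k] ∩ [r'_j, d'_j]| ≥ p'` is an interval matrix: if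
`j₁ < j₂ < j₃` and `a_{j₁,(i,k)} = a_{j₃,(i,k)} = 1` then `a_{j₂,(i,k)} = 1`. -/
theorem interval_matrix {n : ℕ} (r d : Fin n → ℤ) (p' : ℤ)
    (hr : StrictMono r) (hd : StrictMono d)
    (hfeas : ∀ j, r j + p' - 1 ≤ d j)
    (i k : ℤ) (j₁ j₂ j₃ : Fin n) (h12 : j₁ < j₂) (h23 : j₂ < j₃)
    (h1 : p' ≤ ((Finset.Icc i k ∩ Finset.Icc (r j₁) (d j₁)).card : ℤ))
    (h3 : p' ≤ ((Finset.Icc i k ∩ Finset.Icc (r j₃) (d j₃)).card : ℤ)) :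
    p' ≤ ((Finset.Icc i k ∩ Finset.Icc (r j₂) (d j₂)).card : ℤ) := by
  have hlen : p' ≤ (#(Icc (r j₂) (d j₂)) : ℤ) := by
    rw [Int.card_Icc]
    have := hfeas j₂
    omega
  have hmin := min_card_le_card_Icc_inter_Icc (i := i) (k := k) (r₁ := r j₁) (d₃ := d j₃)
    (hr h23).le (hd h12).le
  omega
end

section
/- In the unidirectional case, the LP relaxation of the set covering model [uniSCM] is at least as strong as the LP relaxation of the path-indexed model [PIM]: the optimal value z_1 of the LP relaxation of [uniSCM] satisfies z_1 ≥ z_2, where z_2 is the optimal value of the LP relaxation of [PIM]. -/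
/-!
A fractional interval cover `x` of [uniSCM] is turned into a [PIM] solution by letting every
path carry the total weight `y ℓ` of the intervals through it and every possession the total
weight of the intervals containing it. A possession's weight is at most the load of each of its
paths, a job is covered because the covering constraint of [uniSCM] is a union bound away from
the one of [PIM], and double counting shows `∑ ℓ, y ℓ = ∑ (k - i + 1) x_{ik}`. So every
[uniSCM] value is a [PIM] value, and the infimum over the larger set is smaller.
-/

open Finset

namespace Finset

variable {ι α β M : Type*} [AddCommMonoid M]

theorem sum_filter_exists_le_sum_sum_filter [PartialOrder M] [IsOrderedAddMonoid M]
    {s : Finset α} {t : Finset ι} {p : ι → α → Prop} [∀ i, DecidablePred (p i)]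
    [DecidablePred fun a => ∃ i ∈ t, p i a] {f : α → M} (hf : ∀ a ∈ s, 0 ≤ f a) :
    ∑ a ∈ s with ∃ i ∈ t, p i a, f a ≤ ∑ i ∈ t, ∑ a ∈ s with p i a, f a := by
  simp only [sum_filter]
  rw [sum_comm]
  refine sum_le_sum fun a ha => ?_
  have hterm : ∀ i ∈ t, 0 ≤ if p i a then f a else 0 := fun i _ => by
    split_ifs
    exacts [hf a ha, le_rfl]
  split_ifs with hex
  · obtain ⟨i, hi, hpi⟩ := hex
    calc f a = if p i a then f a else 0 := (if_pos hpi).symm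
      _ ≤ _ := single_le_sum hterm hi
  · exact sum_nonneg hterm

theorem sum_sum_filter_mem_eq_sum_card_smul [DecidableEq β] {s : Finset α} {t : Finset β}
    {I : α → Finset β} (hI : ∀ a ∈ s, I a ⊆ t) (f : α → M) :
    ∑ b ∈ t, ∑ a ∈ s with b ∈ I a, f a = ∑ a ∈ s, #(I a) • f a := by
  rw [sum_comm' (t' := s) (s' := I)]
  · simp only [sum_const]
  · intro b a
    simp only [mem_filter]
    exact ⟨fun ⟨_, ha, hab⟩ => ⟨hab, ha⟩, fun ⟨hab, ha⟩ => ⟨hI a ha hab, ha, hab⟩⟩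

end Finset

noncomputable section MaintenanceScheduling

variable {ι : Type*} (m : ℤ)

/-- `(i, k)` stands for the interval `[ℓ_i, ℓ_k]`. -/
def rowIntervals : Finset (ℤ × ℤ) :=
  (Icc 1 m ×ˢ Icc 1 m).filter fun q => q.1 ≤ q.2

def uniSCMValues (ℛ : ι → Finset (Finset ℤ)) : Set ℝ :=
  {z : ℝ | ∃ x : ℤ × ℤ → ℝ, (∀ q, 0 ≤ x q) ∧
      (∀ j : ι, 1 ≤ ∑ q ∈ (Icc 1 m ×ˢ Icc 1 m).filter
          (fun q => q.1 ≤ q.2 ∧ ∃ R ∈ ℛ j, R ⊆ Icc q.1 q.2), x q) ∧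
      z = ∑ q ∈ rowIntervals m, ((q.2 - q.1 + 1 : ℤ) : ℝ) * x q}

def pimValues (ℛ : ι → Finset (Finset ℤ)) : Set ℝ :=
  {z : ℝ | ∃ (xR : Finset ℤ → ℝ) (y : ℤ → ℝ),
      (∀ R, 0 ≤ xR R) ∧ (∀ ℓ, 0 ≤ y ℓ) ∧
      (∀ j : ι, 1 ≤ ∑ R ∈ ℛ j, xR R) ∧
      (∀ j : ι, ∀ R ∈ ℛ j, ∀ ℓ ∈ R, xR R ≤ y ℓ) ∧
      z = ∑ ℓ ∈ Icc 1 m, y ℓ}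

theorem pimValues_bddBelow (ℛ : ι → Finset (Finset ℤ)) : BddBelow (pimValues m ℛ) := by
  refine ⟨0, fun z ⟨_, y, _, hy, _, _, hz⟩ => ?_⟩
  exact hz ▸ sum_nonneg fun ℓ _ => hy ℓ

theorem uniSCMValues_nonempty (ℛ : ι → Finset (Finset ℤ))
    (h : ∀ j, ∃ R ∈ ℛ j, ∃ a b : ℤ, 1 ≤ a ∧ a ≤ b ∧ b ≤ m ∧ R ⊆ Icc a b) :
    (uniSCMValues m ℛ).Nonempty := by
  refine ⟨_, fun _ => 1, fun _ => zero_le_one, fun j => ?_, rfl⟩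
  obtain ⟨R, hR, a, b, ha, hab, hb, hRab⟩ := h j
  refine single_le_sum (f := fun _ => (1 : ℝ)) (fun _ _ => zero_le_one) (a := (a, b)) ?_
  simp only [mem_filter, mem_product, mem_Icc]
  exact ⟨⟨⟨ha, hab.trans hb⟩, ha.trans hab, hb⟩, hab, R, hR, hRab⟩

variable (x : ℤ × ℤ → ℝ)

def pathLoad (ℓ : ℤ) : ℝ :=
  ∑ q ∈ rowIntervals m with ℓ ∈ Icc q.1 q.2, x q

def possessionLoad (R : Finset ℤ) : ℝ :=
  ∑ q ∈ rowIntervals m with R ⊆ Icc q.1 q.2, x q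

variable {m x}

theorem possessionLoad_le_pathLoad (hx : ∀ q, 0 ≤ x q) {R : Finset ℤ} {ℓ : ℤ} (hℓ : ℓ ∈ R) :
    possessionLoad m x R ≤ pathLoad m x ℓ :=
  sum_le_sum_of_subset_of_nonneg (monotone_filter_right _ fun _ _ hR => hR hℓ)
    fun q _ _ => hx q

theorem sum_pathLoad :
    ∑ ℓ ∈ Icc 1 m, pathLoad m x ℓ =
      ∑ q ∈ rowIntervals m, ((q.2 - q.1 + 1 : ℤ) : ℝ) * x q := by
  have hsub : ∀ q ∈ rowIntervals m, Icc q.1 q.2 ⊆ Icc 1 m := fun q hq => by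
    simp only [rowIntervals, mem_filter, mem_product, mem_Icc] at hq
    exact Icc_subset_Icc hq.1.1.1 hq.1.2.2
  unfold pathLoad
  rw [sum_sum_filter_mem_eq_sum_card_smul hsub]
  refine sum_congr rfl fun q hq => ?_
  have hle : q.1 ≤ q.2 + 1 := by
    simp only [rowIntervals, mem_filter] at hq
    omega
  rw [nsmul_eq_mul, ← Int.cast_natCast, Int.card_Icc_of_le _ _ hle, add_sub_right_comm]

theorem uniSCMValues_subset_pimValues (ℛ : ι → Finset (Finset ℤ)) :
    uniSCMValues m ℛ ⊆ pimValues m ℛ := by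
  rintro z ⟨x, hx, hcover, rfl⟩
  refine ⟨possessionLoad m x, pathLoad m x, fun R => sum_nonneg fun q _ => hx q,
    fun ℓ => sum_nonneg fun q _ => hx q, fun j => ?_,
    fun _ _ _ _ hℓ => possessionLoad_le_pathLoad hx hℓ, sum_pathLoad.symm⟩
  calc (1 : ℝ) ≤ ∑ q ∈ rowIntervals m with ∃ R ∈ ℛ j, R ⊆ Icc q.1 q.2, x q := by
        rw [rowIntervals, filter_filter]
        exact hcover j
    _ ≤ ∑ R ∈ ℛ j, possessionLoad m x R :=
        sum_filter_exists_le_sum_sum_filter fun q _ => hx q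

end MaintenanceScheduling

theorem comparison_SCM_PIM_general {ι : Type*} (m : ℤ)
    (ℛ : ι → Finset (Finset ℤ)) (hR : ∀ j, (ℛ j).Nonempty)
    (hint : ∀ j, ∀ R ∈ ℛ j, ∃ a b : ℤ, 1 ≤ a ∧ a ≤ b ∧ b ≤ m ∧ R = Finset.Icc a b)
    (z₁ z₂ : ℝ)
    (hz₁ : z₁ = sInf {z : ℝ | ∃ x : ℤ × ℤ → ℝ, (∀ q, 0 ≤ x q) ∧
      (∀ j : ι, 1 ≤ ∑ q ∈ (Finset.Icc 1 m ×ˢ Finset.Icc 1 m).filter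
          (fun q => q.1 ≤ q.2 ∧ ∃ R ∈ ℛ j, R ⊆ Finset.Icc q.1 q.2), x q) ∧
      z = ∑ q ∈ (Finset.Icc 1 m ×ˢ Finset.Icc 1 m).filter (fun q => q.1 ≤ q.2),
            ((q.2 - q.1 + 1 : ℤ) : ℝ) * x q})
    (hz₂ : z₂ = sInf {z : ℝ | ∃ (xR : Finset ℤ → ℝ) (y : ℤ → ℝ),
      (∀ R, 0 ≤ xR R) ∧ (∀ ℓ, 0 ≤ y ℓ) ∧
      (∀ j : ι, 1 ≤ ∑ R ∈ ℛ j, xR R) ∧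
      (∀ j : ι, ∀ R ∈ ℛ j, ∀ ℓ ∈ R, xR R ≤ y ℓ) ∧
      z = ∑ ℓ ∈ Finset.Icc 1 m, y ℓ}) :
    z₂ ≤ z₁ := by
  rw [hz₁, hz₂]
  refine csInf_le_csInf (pimValues_bddBelow m ℛ) (uniSCMValues_nonempty m ℛ fun j => ?_)
    (uniSCMValues_subset_pimValues ℛ)
  obtain ⟨R, hRj⟩ := hR j
  obtain ⟨a, b, ha, hab, hb, rfl⟩ := hint j R hRj
  exact ⟨_, hRj, a, b, ha, hab, hb, subset_rfl⟩

/-- Proposition (`prop:comparison_SCM_PIM`): for the unidirectional maintenance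
scheduling problem (possessions are subintervals `[ℓ_a, ℓ_b]` of the path row
`ℓ_1, …, ℓ_m`), the optimal value `z₁` of the LP relaxation of the set covering
model [uniSCM] is at least the optimal value `z₂` of the LP relaxation of the
path indexed model [PIM]. -/
theorem comparison_SCM_PIM {ι : Type*} [Fintype ι] (m : ℤ)
    (ℛ : ι → Finset (Finset ℤ)) (hR : ∀ j, (ℛ j).Nonempty)
    (hint : ∀ j, ∀ R ∈ ℛ j, ∃ a b : ℤ, 1 ≤ a ∧ a ≤ b ∧ b ≤ m ∧ R = Finset.Icc a b)
    (z₁ z₂ : ℝ)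
    (hz₁ : z₁ = sInf {z : ℝ | ∃ x : ℤ × ℤ → ℝ, (∀ q, 0 ≤ x q) ∧
      (∀ j : ι, 1 ≤ ∑ q ∈ (Finset.Icc 1 m ×ˢ Finset.Icc 1 m).filter
          (fun q => q.1 ≤ q.2 ∧ ∃ R ∈ ℛ j, R ⊆ Finset.Icc q.1 q.2), x q) ∧
      z = ∑ q ∈ (Finset.Icc 1 m ×ˢ Finset.Icc 1 m).filter (fun q => q.1 ≤ q.2),
            ((q.2 - q.1 + 1 : ℤ) : ℝ) * x q})
    (hz₂ : z₂ = sInf {z : ℝ | ∃ (xR : Finset ℤ → ℝ) (y : ℤ → ℝ),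
      (∀ R, 0 ≤ xR R) ∧ (∀ ℓ, 0 ≤ y ℓ) ∧
      (∀ j : ι, 1 ≤ ∑ R ∈ ℛ j, xR R) ∧
      (∀ j : ι, ∀ R ∈ ℛ j, ∀ ℓ ∈ R, xR R ≤ y ℓ) ∧
      z = ∑ ℓ ∈ Finset.Icc 1 m, y ℓ}) :
    z₂ ≤ z₁ :=
  comparison_SCM_PIM_general m ℛ hR hint z₁ z₂ hz₁ hz₂
end

section
/- For every s ∈ {2,…,t} and every job j with f(s−1) < j ≤ f(s), the span (i_s, k_s) covers job j, i.e., |[i_s,k_s] ∩ [r'_j,d'_j]| ≥ p_j. -/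
open Finset
open scoped Classical

/-- Job `j` is covered by the span `[a,b]`: `|[a,b] ∩ [r'_j,d'_j]| ≥ p_j`. -/
def covers (r d p : ℕ → ℤ) (a b : ℤ) (j : ℕ) : Prop :=
  p j ≤ ((Finset.Icc a b ∩ Finset.Icc (r j) (d j)).card : ℤ)

/-- Feasibility of a set of spans: every job `1, …, n` is covered by some span. -/
def FeasibleSpans (n : ℕ) (r d p : ℕ → ℤ) (S : Finset (ℤ × ℤ)) : Prop :=
  ∀ j ∈ Finset.Icc 1 n, ∃ q ∈ S, covers r d p q.1 q.2 j

/-- Cost of a set of spans: total number of paths they contain. -/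
def spanCost (S : Finset (ℤ × ℤ)) : ℤ := ∑ q ∈ S, (q.2 - q.1 + 1)

/-- `f(s)`: the largest job index `j` such that all jobs up to `j` can be covered by the
first `s` spans (0 if there is none). -/
noncomputable def fFun (n : ℕ) (r d p : ℕ → ℤ) (i k : ℕ → ℤ) (s : ℕ) : ℕ :=
  WithBot.unbotD 0 (((Finset.Icc 1 n).filter fun j => ∀ j' ∈ Finset.Icc 1 j,
      ∃ s' ∈ Finset.Icc 1 s, covers r d p (i s') (k s') j').max)

/-!
Take `f(s-1) < j ≤ f(s)`. Since `j > f(s-1)`, some job `j₀ ≤ j` is missed by the first `s - 1`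
spans, yet every job up to `f(s)` is covered by the first `s`; so `j₀` is covered by span `s`,
while `j` is covered by some span `s' ≤ s`. If `s' < s`, span `s'` lies strictly left of span `s`
and covers `j` but not `j₀`. As `j₀` is released and due no later than `j`, this forces
`p_j < p_{j₀}` (when `p_j > 0`; otherwise covering is trivial), and `[r_j, d_j]` meets span `s`
in at least as many points as `[r_{j₀}, d_{j₀}]` does, so span `s` covers `j` as well.
-/

theorem covers_iff (r d p : ℕ → ℤ) (a b : ℤ) (j : ℕ) :
    covers r d p a b j ↔ p j ≤ max (min b (d j) + 1 - max a (r j)) 0 := by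
  have hinter : Icc a b ∩ Icc (r j) (d j) = Icc (max a (r j)) (min b (d j)) := by
    ext x
    simp only [mem_inter, mem_Icc]
    omega
  rw [covers, hinter, Int.card_Icc, Int.toNat_eq_max]

theorem covers_of_covers_of_not_covers (r d p : ℕ → ℤ) {a b a' b' : ℤ} {j₀ j : ℕ}
    (hr : r j₀ ≤ r j) (hd : d j₀ ≤ d j) (hsep : b' < a)
    (hj₀ : covers r d p a b j₀) (hj : covers r d p a' b' j) (hj₀' : ¬ covers r d p a' b' j₀) :
    covers r d p a b j := by
  rw [covers_iff] at *
  omega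

theorem end_lt_start_of_lt (t : ℕ) (i k : ℕ → ℤ)
    (hik : ∀ s, 1 ≤ s → s ≤ t → i s ≤ k s)
    (hsep : ∀ s, 1 ≤ s → s < t → k s + 2 ≤ i (s + 1))
    {a b : ℕ} (ha : 1 ≤ a) (hab : a < b) (hb : b ≤ t) : k a < i b := by
  induction b, hab using Nat.le_induction with
  | base =>
    have := hsep a ha (by omega)
    show k a < i (a + 1)
    omega
  | succ b hab ih =>
    have := hsep b (by omega) (by omega)
    have := hik b (by omega) (by omega)
    have := ih (by omega)
    omega

theorem unbotD_max_mem {α : Type*} [LinearOrder α] {F : Finset α} (hF : F.Nonempty) (a : α) :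
    F.max.unbotD a ∈ F := by
  rw [← coe_max' hF, WithBot.unbotD_coe]
  exact max'_mem F hF

theorem le_unbotD_max {α : Type*} [LinearOrder α] {F : Finset α} {x : α} (hx : x ∈ F) (a : α) :
    x ≤ F.max.unbotD a := by
  rw [← coe_max' ⟨x, hx⟩, WithBot.unbotD_coe]
  exact le_max' F x hx

section fFun

variable {n : ℕ} {r d p : ℕ → ℤ} {i k : ℕ → ℤ} {s j : ℕ}

theorem forall_covers_of_le_fFun (hj : 1 ≤ j) (hjf : j ≤ fFun n r d p i k s) :
    j ≤ n ∧ ∀ j' ∈ Icc 1 j, ∃ s' ∈ Icc 1 s, covers r d p (i s') (k s') j' := by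
  unfold fFun at hjf
  set F := (Icc 1 n).filter fun j => ∀ j' ∈ Icc 1 j, ∃ s' ∈ Icc 1 s, covers r d p (i s') (k s') j'
  have hF : F.Nonempty := by
    by_contra hF
    rw [not_nonempty_iff_eq_empty.mp hF, max_empty, WithBot.unbotD_bot] at hjf
    omega
  have hmem := unbotD_max_mem hF 0
  simp only [F, mem_filter] at hmem
  obtain ⟨hmax, hcov⟩ := hmem
  refine ⟨hjf.trans (mem_Icc.mp hmax).2, fun j' hj' => hcov j' ?_⟩
  exact mem_Icc.mpr ⟨(mem_Icc.mp hj').1, (mem_Icc.mp hj').2.trans hjf⟩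

theorem exists_not_covers_of_fFun_lt (hjf : fFun n r d p i k s < j) (hjn : j ≤ n) :
    ∃ j₀ ∈ Icc 1 j, ∀ s' ∈ Icc 1 s, ¬ covers r d p (i s') (k s') j₀ := by
  by_contra! hcov
  unfold fFun at hjf
  have hmem : j ∈ (Icc 1 n).filter fun j =>
      ∀ j' ∈ Icc 1 j, ∃ s' ∈ Icc 1 s, covers r d p (i s') (k s') j' := by
    simp only [mem_filter]
    exact ⟨mem_Icc.mpr ⟨by omega, hjn⟩, hcov⟩
  exact hjf.not_ge (le_unbotD_max hmem 0)

end fFun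

theorem interval_partition_general (n t : ℕ) (r d p : ℕ → ℤ)
    (hr : ∀ j j', 1 ≤ j → j ≤ j' → j' ≤ n → r j ≤ r j')
    (hd : ∀ j j', 1 ≤ j → j ≤ j' → j' ≤ n → d j ≤ d j')
    (i k : ℕ → ℤ)
    (hik : ∀ s, 1 ≤ s → s ≤ t → i s ≤ k s)
    (hsep : ∀ s, 1 ≤ s → s < t → k s + 2 ≤ i (s + 1)) :
    ∀ s, 2 ≤ s → s ≤ t → ∀ j, fFun n r d p i k (s - 1) < j → j ≤ fFun n r d p i k s →
      covers r d p (i s) (k s) j := by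
  intro s _ hst j hj_gt hj_le
  obtain ⟨hjn, hcov⟩ := forall_covers_of_le_fFun (by omega) hj_le
  obtain ⟨j₀, hj₀, hmiss⟩ := exists_not_covers_of_fFun_lt hj_gt hjn
  obtain ⟨hj₀1, hj₀j⟩ := mem_Icc.mp hj₀
  obtain ⟨s₀, hs₀, hcov₀⟩ := hcov j₀ hj₀
  obtain ⟨hs₀1, hs₀s⟩ := mem_Icc.mp hs₀
  obtain rfl : s₀ = s := by
    by_contra hne
    exact hmiss s₀ (mem_Icc.mpr ⟨hs₀1, by omega⟩) hcov₀
  obtain ⟨s', hs', hcovj⟩ := hcov j (mem_Icc.mpr ⟨by omega, le_rfl⟩)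
  obtain ⟨hs'1, hs's⟩ := mem_Icc.mp hs'
  rcases hs's.lt_or_eq with hlt | rfl
  · exact covers_of_covers_of_not_covers r d p (hr j₀ j hj₀1 hj₀j hjn) (hd j₀ j hj₀1 hj₀j hjn)
      (end_lt_start_of_lt t i k hik hsep hs'1 hlt hst) hcov₀ hcovj
      (hmiss s' (mem_Icc.mpr ⟨hs'1, by omega⟩))
  · exact hcovj

/-- Lemma (`lem:interval_partition`): for every `s ∈ {2,…,t}` and every job `j` with
`f(s-1) < j ≤ f(s)`, the span `(i_s, k_s)` covers job `j`. -/
theorem interval_partition (n t : ℕ) (r d p : ℕ → ℤ)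
    (hp : ∀ j, 1 ≤ j → j ≤ n → 1 ≤ p j)
    (hfeas : ∀ j, 1 ≤ j → j ≤ n → r j + p j - 1 ≤ d j)
    (hr : ∀ j j', 1 ≤ j → j ≤ j' → j' ≤ n → r j ≤ r j')
    (hd : ∀ j j', 1 ≤ j → j ≤ j' → j' ≤ n → d j ≤ d j')
    (hn : 1 ≤ n) (ht : 1 ≤ t)
    (i k : ℕ → ℤ) (S : Finset (ℤ × ℤ))
    (hS : S = (Finset.Icc 1 t).image fun s => (i s, k s))
    (hcard : S.card = t)
    (hik : ∀ s, 1 ≤ s → s ≤ t → i s ≤ k s)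
    (hsep : ∀ s, 1 ≤ s → s < t → k s + 2 ≤ i (s + 1))
    (hfeasS : FeasibleSpans n r d p S)
    (hopt : ∀ S' : Finset (ℤ × ℤ), FeasibleSpans n r d p S' → spanCost S ≤ spanCost S')
    (hminsupp : ∀ S' : Finset (ℤ × ℤ), FeasibleSpans n r d p S' →
      spanCost S' = spanCost S → S.card ≤ S'.card) :
    ∀ s, 2 ≤ s → s ≤ t → ∀ j, fFun n r d p i k (s - 1) < j → j ≤ fFun n r d p i k s →
      covers r d p (i s) (k s) j :=
  interval_partition_general n t r d p hr hd i k hik hsep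
end

section
/- For every path set 𝒥 of jobs with singleton possessions, there exists an optimal solution X contained in 𝒫* (the union over jobs j of the sets ℛ*_j consisting of the last up-path and last down-path of ℛ_j). -/
open Finset
open scoped Classical

/-- Paths are pairs (direction, index). -/
abbrev BPath := Bool × ℤ

/-- `ℛ*_j`: the paths of maximal index of each direction present in `ℛ j`
(the last up-path and the last down-path of `ℛ j`). -/
noncomputable def Rstar {ι : Type*} (ℛ : ι → Finset BPath) (j : ι) : Finset BPath :=
  (ℛ j).filter fun q => ∀ q' ∈ ℛ j, q'.1 = q.1 → q'.2 ≤ q.2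

/-!
Take any optimal solution and replace each of its paths `p` by a path `q` of the same
direction that lies in every `ℛ j` containing `p`, chosen with maximal index. The solution
stays feasible and does not grow. If `q` were the last path of its direction in none of these
`ℛ j`, then, as the indices of each direction in `ℛ j` form an interval, the next path `q + 1`
would also lie in all of them, contradicting the maximality of `q`.
-/

section HittingSet

variable {ι α : Type*} [DecidableEq α] {ℛ : ι → Finset α}

theorem exists_min_card_hitting [Fintype ι] (hR : ∀ j, (ℛ j).Nonempty) :
    ∃ X : Finset α, (∀ j, (X ∩ ℛ j).Nonempty) ∧
      ∀ Y : Finset α, (∀ j, (Y ∩ ℛ j).Nonempty) → X.card ≤ Y.card := by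
  have hfeas : (univ.biUnion ℛ : Finset α) ∈ {X : Finset α | ∀ j, (X ∩ ℛ j).Nonempty} := by
    intro j
    obtain ⟨p, hp⟩ := hR j
    exact ⟨p, mem_inter.2 ⟨mem_biUnion.2 ⟨j, mem_univ j, hp⟩, hp⟩⟩
  obtain ⟨X, hX, hmin⟩ := (measure Finset.card).wf.has_min _ ⟨_, hfeas⟩
  exact ⟨X, hX, fun Y hY => not_lt.1 (hmin Y hY)⟩

theorem exists_subset_card_le_hitting_of_dominated {S : Finset α}
    (hS : ∀ p j, p ∈ ℛ j → ∃ q ∈ S, ∀ j', p ∈ ℛ j' → q ∈ ℛ j') (Y : Finset α) :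
    ∃ X ⊆ S, X.card ≤ Y.card ∧ ∀ j, (Y ∩ ℛ j).Nonempty → (X ∩ ℛ j).Nonempty := by
  induction Y using Finset.induction_on with
  | empty => exact ⟨∅, empty_subset S, le_rfl, fun j h => by simp at h⟩
  | insert p Y hpY ih =>
    obtain ⟨X, hXS, hXcard, hXhit⟩ := ih
    by_cases hp : ∃ j, p ∈ ℛ j
    · obtain ⟨j₀, hj₀⟩ := hp
      obtain ⟨q, hqS, hqdom⟩ := hS p j₀ hj₀
      refine ⟨insert q X, insert_subset hqS hXS, ?_, fun j hj => ?_⟩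
      · rw [card_insert_of_notMem hpY]
        exact (card_insert_le q X).trans (Nat.succ_le_succ hXcard)
      by_cases hpj : p ∈ ℛ j
      · exact ⟨q, mem_inter.2 ⟨mem_insert_self q X, hqdom j hpj⟩⟩
      · rw [insert_inter_of_notMem hpj] at hj
        exact (hXhit j hj).mono (inter_subset_inter_right (subset_insert q X))
    · refine ⟨X, hXS, hXcard.trans (card_le_card (subset_insert p Y)), fun j hj => hXhit j ?_⟩
      rwa [insert_inter_of_notMem fun hpj => hp ⟨j, hpj⟩] at hj

theorem exists_min_card_hitting_subset_of_dominated [Fintype ι] (hR : ∀ j, (ℛ j).Nonempty)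
    {S : Finset α} (hS : ∀ p j, p ∈ ℛ j → ∃ q ∈ S, ∀ j', p ∈ ℛ j' → q ∈ ℛ j') :
    ∃ X : Finset α, (∀ j, (X ∩ ℛ j).Nonempty) ∧
      (∀ Y : Finset α, (∀ j, (Y ∩ ℛ j).Nonempty) → X.card ≤ Y.card) ∧ X ⊆ S := by
  obtain ⟨Y, hY, hYmin⟩ := exists_min_card_hitting hR
  obtain ⟨X, hXS, hXcard, hXhit⟩ := exists_subset_card_le_hitting_of_dominated hS Y
  exact ⟨X, fun j => hXhit j (hY j), fun Z hZ => hXcard.trans (hYmin Z hZ), hXS⟩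

end HittingSet

theorem exists_mem_Rstar_dominating {ι : Type*} [Fintype ι] {ℛ : ι → Finset BPath}
    (hconn : ∀ j d, Set.OrdConnected {i : ℤ | (d, i) ∈ ℛ j}) {p : BPath} {j : ι}
    (hp : p ∈ ℛ j) : ∃ q ∈ univ.biUnion (Rstar ℛ), ∀ j', p ∈ ℛ j' → q ∈ ℛ j' := by
  set D := (univ.biUnion ℛ).filter fun q => q.1 = p.1 ∧ p.2 ≤ q.2 ∧ ∀ j', p ∈ ℛ j' → q ∈ ℛ j'
  have hpD : p ∈ D := mem_filter.2 ⟨mem_biUnion.2 ⟨j, mem_univ j, hp⟩, rfl, le_rfl, fun _ h => h⟩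
  obtain ⟨q, hqD, hqmax⟩ := D.exists_max_image Prod.snd ⟨p, hpD⟩
  obtain ⟨-, hqdir, hpq, hqdom⟩ := mem_filter.1 hqD
  refine ⟨q, ?_, hqdom⟩
  by_contra hq
  have hnext_dom : ∀ j', p ∈ ℛ j' → (q.1, q.2 + 1) ∈ ℛ j' := by
    intro j' hpj'
    have hqj' := hqdom j' hpj'
    have hnottop : q ∉ Rstar ℛ j' := fun h => hq (mem_biUnion.2 ⟨j', mem_univ j', h⟩)
    simp only [Rstar, mem_filter, hqj', true_and, not_forall, not_le, exists_prop] at hnottop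
    obtain ⟨⟨_, i'⟩, hq'j', rfl, hlt⟩ := hnottop
    exact (hconn j' q.1).out hqj' hq'j' ⟨by omega, hlt⟩
  have hnextD : (q.1, q.2 + 1) ∈ D :=
    mem_filter.2 ⟨mem_biUnion.2 ⟨j, mem_univ j, hnext_dom j hp⟩, hqdir, by omega, hnext_dom⟩
  have hle := hqmax _ hnextD
  omega

/-- Lemma (`lem:interesting_paths`): in the singleton-possession setting, there exists an
optimal solution contained in `𝒫* = ⋃_j ℛ*_j`. Here a solution is `X` with
`X ∩ ℛ j ≠ ∅` for every job `j`, and the index sets of each direction in each `ℛ j`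
are intervals of consecutive integers. -/
theorem optimal_solution_in_Pstar {ι : Type*} [Fintype ι]
    (ℛ : ι → Finset BPath) (hR : ∀ j, (ℛ j).Nonempty)
    (hint : ∀ (j : ι) (dir : Bool) (i₁ i₂ i₃ : ℤ), i₁ ≤ i₂ → i₂ ≤ i₃ →
      (dir, i₁) ∈ ℛ j → (dir, i₃) ∈ ℛ j → (dir, i₂) ∈ ℛ j) :
    ∃ X : Finset BPath,
      (∀ j, (X ∩ ℛ j).Nonempty) ∧
      (∀ Y : Finset BPath, (∀ j, (Y ∩ ℛ j).Nonempty) → X.card ≤ Y.card) ∧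
      X ⊆ Finset.univ.biUnion (Rstar ℛ) := by
  have hord : ∀ j d, Set.OrdConnected {i : ℤ | (d, i) ∈ ℛ j} := fun j d =>
    ⟨fun i₁ h₁ i₃ h₃ i₂ hi => hint j d i₁ i₂ i₃ hi.1 hi.2 h₁ h₃⟩
  exact exists_min_card_hitting_subset_of_dominated hR fun p j hp =>
    exists_mem_Rstar_dominating hord hp
end

section
/- If for two jobs j, j' it holds that for every possession R ∈ ℛ_j there exists a possession R' ∈ ℛ_{j'} with R' ⊆ R, then removing job j' from the instance does not change the optimal objective value: the minimum cardinality of ⋃_j R_j over feasible selections for 𝒥 equals that over feasible selections for 𝒥 ∖ {j'}. -/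
/-!
Dropping job `j'` can only shrink the union. Conversely, given a selection for the reduced
instance, choose for `j'` a possession `R' ⊆ R_j`: adding it leaves the union unchanged, since
`j ≠ j'` is still present. So each objective value on one side is matched or beaten on the other.
-/

open Finset
open scoped Classical

theorem Finset.biUnion_insert_update_subset {α ι : Type*} [DecidableEq α] [DecidableEq ι]
    {s : Finset ι} {f : ι → Finset α} {j j' : ι} {R' : Finset α} (hj : j ∈ s)
    (hR' : R' ⊆ f j) : (insert j' s).biUnion (Function.update f j' R') ⊆ s.biUnion f :=
  biUnion_subset.2 fun i hi => by
    rcases eq_or_ne i j' with rfl | hij'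
    · rw [Function.update_self]
      exact hR'.trans (subset_biUnion_of_mem f hj)
    · rw [Function.update_of_ne hij']
      exact subset_biUnion_of_mem f ((mem_insert.1 hi).resolve_left hij')

theorem remove_dominated_job_general {α ι : Type*} [DecidableEq α] [DecidableEq ι] [Fintype ι]
    (ℛ : ι → Finset (Finset α))
    (j j' : ι) (hne : j ≠ j')
    (hdom : ∀ R ∈ ℛ j, ∃ R' ∈ ℛ j', R' ⊆ R) :
    sInf {n | ∃ f : ι → Finset α, (∀ i, f i ∈ ℛ i) ∧
        n = (Finset.univ.biUnion f).card}
      = sInf {n | ∃ f : ι → Finset α, (∀ i, f i ∈ ℛ i) ∧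
        n = ((Finset.univ.erase j').biUnion f).card} := by
  apply csInf_eq_csInf_of_forall_exists_le
  · rintro _ ⟨f, hf, rfl⟩
    exact ⟨_, ⟨f, hf, rfl⟩,
      card_le_card (biUnion_subset_biUnion_of_subset_left f (erase_subset _ _))⟩
  · rintro _ ⟨f, hf, rfl⟩
    obtain ⟨R', hR', hR'f⟩ := hdom (f j) (hf j)
    have hsub := biUnion_insert_update_subset (j' := j') (mem_erase.2 ⟨hne, mem_univ j⟩) hR'f
    rw [insert_erase (mem_univ j')] at hsub
    exact ⟨_, ⟨Function.update f j' R', (Function.forall_update_iff _ _).2 ⟨hR', fun i _ => hf i⟩,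
      rfl⟩, card_le_card hsub⟩

/-- If for jobs `j, j'` every possession `R ∈ ℛ j` contains some possession
`R' ∈ ℛ j'`, then removing job `j'` does not change the optimal objective value:
the minimum cardinality of `⋃_i R_i` over feasible selections for the full job set
equals that over the job set without `j'`. -/
theorem remove_dominated_job {α ι : Type*} [DecidableEq α] [DecidableEq ι] [Fintype ι]
    (ℛ : ι → Finset (Finset α)) (hR : ∀ i, (ℛ i).Nonempty)
    (j j' : ι) (hne : j ≠ j')
    (hdom : ∀ R ∈ ℛ j, ∃ R' ∈ ℛ j', R' ⊆ R) :
    sInf {n | ∃ f : ι → Finset α, (∀ i, f i ∈ ℛ i) ∧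
        n = (Finset.univ.biUnion f).card}
      = sInf {n | ∃ f : ι → Finset α, (∀ i, f i ∈ ℛ i) ∧
        n = ((Finset.univ.erase j').biUnion f).card} :=
  remove_dominated_job_general ℛ j j' hne hdom
end
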